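/- arXiv:0709.1416 — 3 statements merged into one kernel-verified Lean document; each statement's English description precedes it below -/
import Mathlib

section
/- The first moment of the degree distribution RIG(m,n,p) equals (n-1)(1 - (1-p²)^m); i.e., the derivative at z = 1 of g(z) = ∑_{j=0}^{n-1} C(n-1,j) z^j (1-z)^{n-1-j} [1 - p + p(1-p)^{n-1-j}]^m equals (n-1)(1 - (1-p²)^m). -/
/-!
In the Bernstein basis `b_{N,j} = C(N,j) z^j (1-z)^(N-j)` with `N = n - 1`, the generating function
is `∑ⱼ b_{N,j}(z) cⱼ` with `cⱼ = (1 - p + p(1-p)^(N-j))^m`. Since `b_{N,j}' = N (b_{N-1,j-1} - b_{N-1,j})`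
and `b_{N-1,k}(1) = [k = N-1]`, its derivative at `1` is `N (c_N - c_{N-1})`,
and `c_N = 1`, `c_{N-1} = (1 - p²)^m`.
-/

open Finset Polynomial

theorem bernsteinPolynomial.derivative_eval_one {R : Type*} [CommRing R] (n ν : ℕ) :
    (derivative (bernsteinPolynomial R n ν)).eval 1 =
      n * ((if ν = n then 1 else 0) - if ν + 1 = n then 1 else 0) := by
  rcases ν with _ | ν
  · rw [bernsteinPolynomial.derivative_zero]
    rcases n with _ | _ | n <;> simp [bernsteinPolynomial.eval_at_1]
  · rw [bernsteinPolynomial.derivative_succ]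
    rcases n with _ | n
    · simp
    · simp [bernsteinPolynomial.eval_at_1]

theorem hasDerivAt_sum_bernsteinPolynomial_mul_at_one {𝕜 : Type*} [NontriviallyNormedField 𝕜]
    (n : ℕ) (c : ℕ → 𝕜) :
    HasDerivAt (fun z => ∑ ν ∈ range (n + 1), (bernsteinPolynomial 𝕜 n ν).eval z * c ν)
      (n * (c n - c (n - 1))) 1 := by
  set P := ∑ ν ∈ range (n + 1), C (c ν) * bernsteinPolynomial 𝕜 n ν
  have hP : (fun z => ∑ ν ∈ range (n + 1), (bernsteinPolynomial 𝕜 n ν).eval z * c ν) =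
      fun z => P.eval z := by
    ext z
    simp [P, eval_finsetSum, mul_comm]
  rw [hP]
  refine (P.hasDerivAt 1).congr_deriv ?_
  simp only [P, derivative_sum, derivative_C_mul, eval_finsetSum, eval_mul, eval_C,
    bernsteinPolynomial.derivative_eval_one]
  rcases n with _ | n
  · simp
  · simp only [Nat.cast_add, Nat.cast_one, Nat.add_right_cancel_iff, mul_sub, mul_ite, mul_one,
      mul_zero, sum_sub_distrib, sum_ite_eq', mem_range, lt_add_iff_pos_right, Order.lt_one_iff,
      ↓reduceIte, Order.lt_add_one_iff, le_add_iff_nonneg_right, zero_le, add_tsub_cancel_right]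
    ring

theorem rig_first_moment_general (m n : ℕ) (hn : 1 ≤ n) (p : ℝ) :
    HasDerivAt
      (fun z : ℝ => ∑ j ∈ Finset.range n,
        (Nat.choose (n - 1) j : ℝ) * z ^ j * (1 - z) ^ (n - 1 - j) *
          (1 - p + p * (1 - p) ^ (n - 1 - j)) ^ m)
      ((n - 1 : ℝ) * (1 - (1 - p ^ 2) ^ m)) 1 := by
  obtain ⟨N, rfl⟩ := Nat.exists_eq_add_of_le' hn
  refine ((hasDerivAt_sum_bernsteinPolynomial_mul_at_one N
    (fun j => (1 - p + p * (1 - p) ^ (N - j)) ^ m)).congr_deriv ?_).congr_of_eventuallyEq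
    (.of_eq ?_)
  · rcases N with _ | N
    · simp
    · have hc : 1 - p + p * (1 - p) = 1 - p ^ 2 := by ring
      simp [hc]
  · funext z
    simp [bernsteinPolynomial]

theorem rig_first_moment (m n : ℕ) (hn : 1 ≤ n) (p : ℝ) (hp0 : 0 ≤ p) (hp1 : p ≤ 1) :
    HasDerivAt
      (fun z : ℝ => ∑ j ∈ Finset.range n,
        (Nat.choose (n - 1) j : ℝ) * z ^ j * (1 - z) ^ (n - 1 - j) *
          (1 - p + p * (1 - p) ^ (n - 1 - j)) ^ m)
      ((n - 1 : ℝ) * (1 - (1 - p ^ 2) ^ m)) 1 :=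
  rig_first_moment_general m n hn p
end

section
/- For fixed β, γ > 0, the second factorial moment (n-1)(n-2)[1 - 2(1-p²)^m + (1-p²(2-p))^m] with m = ⌊βn⌋ and p = γ/n converges, as n → ∞, to μ² + μγ where μ = βγ²; hence the second moment of RIG(⌊βn⌋, n, γ/n) converges to μ(1 + μ + γ). -/
/-!
With `q = γ / n`, `a = 1 - q²`, `b = 1 - q²(2 - q)` and `m = ⌊βn⌋`, split
`1 - 2aᵐ + bᵐ = (1 - aᵐ)² + (bᵐ - (a²)ᵐ)`. Both pieces are differences of `m`-th powers of
numbers `0 ≤ y ≤ x ≤ 1` with `m(1 - y) → 0`, for which `xᵐ - yᵐ = m(x - y)(1 + o(1))`.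
Since `n · m(1 - a) → βγ² = μ` and `n² · m(b - a²) = n² m q³(1 - q) → βγ³ = μγ`, the first piece
contributes `μ²` and the second `μγ`.
-/

open Filter Topology

section PowSubPow

variable {x y : ℝ}

theorem pow_sub_pow_le_mul_sub (hy : 0 ≤ y) (hyx : y ≤ x) (hx : x ≤ 1) (m : ℕ) :
    x ^ m - y ^ m ≤ m * (x - y) := by
  have hmax : max |x| |y| ≤ 1 :=
    max_le (abs_le.2 ⟨by linarith, hx⟩) (abs_le.2 ⟨by linarith, by linarith⟩)
  calc x ^ m - y ^ m ≤ |x ^ m - y ^ m| := le_abs_self _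
    _ ≤ |x - y| * m * max |x| |y| ^ (m - 1) := abs_pow_sub_pow_le ..
    _ ≤ (x - y) * m * 1 := by
      rw [abs_of_nonneg (sub_nonneg.2 hyx)]
      gcongr
      exact pow_le_one₀ (le_max_of_le_left (abs_nonneg x)) hmax
    _ = m * (x - y) := by ring

theorem mul_pow_pred_mul_sub_le_pow_sub_pow (hy : 0 ≤ y) (hyx : y ≤ x) (m : ℕ) :
    m * y ^ (m - 1) * (x - y) ≤ x ^ m - y ^ m := by
  rw [← geom_sum₂_mul]
  refine mul_le_mul_of_nonneg_right ?_ (sub_nonneg.2 hyx)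
  have hterm : ∀ i ∈ Finset.range m, y ^ (m - 1) ≤ x ^ i * y ^ (m - 1 - i) := fun i hi => by
    have hi : i < m := Finset.mem_range.1 hi
    calc y ^ (m - 1) = y ^ i * y ^ (m - 1 - i) := by rw [← pow_add]; congr 1; omega
      _ ≤ x ^ i * y ^ (m - 1 - i) := by gcongr
  simpa using Finset.card_nsmul_le_sum _ _ _ hterm

theorem mul_sub_mul_one_sub_le_pow_sub_pow (hy : 0 ≤ y) (hyx : y ≤ x) (hy1 : y ≤ 1) (m : ℕ) :
    m * (x - y) * (1 - m * (1 - y)) ≤ x ^ m - y ^ m := by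
  have hbernoulli : 1 - m * (1 - y) ≤ y ^ (m - 1) := by
    have hpred : ((m - 1 : ℕ) : ℝ) * (1 - y) ≤ m * (1 - y) :=
      mul_le_mul_of_nonneg_right (Nat.cast_le.2 (Nat.sub_le m 1)) (by linarith)
    linarith [one_add_mul_sub_le_pow (by linarith : (-1 : ℝ) ≤ y) (m - 1)]
  calc m * (x - y) * (1 - m * (1 - y)) ≤ m * (x - y) * y ^ (m - 1) := by gcongr
    _ = m * y ^ (m - 1) * (x - y) := by ring
    _ ≤ x ^ m - y ^ m := mul_pow_pred_mul_sub_le_pow_sub_pow hy hyx m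

theorem tendsto_mul_pow_sub_pow {ι : Type*} {l : Filter ι} {s x y : ι → ℝ} {m : ι → ℕ} {L : ℝ}
    (hxy : ∀ᶠ i in l, 0 ≤ y i ∧ y i ≤ x i ∧ x i ≤ 1) (hs : ∀ᶠ i in l, 0 ≤ s i)
    (hlin : Tendsto (fun i => s i * (m i * (x i - y i))) l (𝓝 L))
    (hsmall : Tendsto (fun i => m i * (1 - y i)) l (𝓝 0)) :
    Tendsto (fun i => s i * (x i ^ m i - y i ^ m i)) l (𝓝 L) := by
  have hlower : Tendsto (fun i => s i * (m i * (x i - y i) * (1 - m i * (1 - y i)))) l (𝓝 L) := by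
    simpa [mul_assoc] using hlin.mul (hsmall.const_sub 1)
  refine tendsto_of_tendsto_of_tendsto_of_le_of_le' hlower hlin ?_ ?_
  · filter_upwards [hxy, hs] with i ⟨hy, hyx, hx⟩ hsi
    exact mul_le_mul_of_nonneg_left
      (mul_sub_mul_one_sub_le_pow_sub_pow hy hyx (hyx.trans hx) _) hsi
  · filter_upwards [hxy, hs] with i ⟨hy, hyx, hx⟩ hsi
    exact mul_le_mul_of_nonneg_left (pow_sub_pow_le_mul_sub hy hyx hx _) hsi

end PowSubPow

section RandomIntersectionGraph

variable {β γ : ℝ}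

theorem tendsto_natFloor_mul_div_natCast (hβ : 0 ≤ β) :
    Tendsto (fun n : ℕ => (⌊β * n⌋₊ : ℝ) / n) atTop (𝓝 β) :=
  (tendsto_nat_floor_mul_div_atTop hβ).comp tendsto_natCast_atTop_atTop

theorem eventually_div_natCast_mem_Icc (hγ : 0 ≤ γ) :
    ∀ᶠ n : ℕ in atTop, γ / n ∈ Set.Icc (0 : ℝ) 1 := by
  filter_upwards [eventually_ge_atTop ⌈γ⌉₊] with n hn
  exact ⟨by positivity, div_le_one_of_le₀ (Nat.ceil_le.1 hn) (Nat.cast_nonneg n)⟩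

theorem tendsto_mul_one_sub_one_sub_sq_pow (hβ : 0 ≤ β) (hγ : 0 ≤ γ) :
    Tendsto (fun n : ℕ => (n : ℝ) * (1 - (1 - (γ / n) ^ 2) ^ ⌊β * n⌋₊)) atTop
      (𝓝 (β * γ ^ 2)) := by
  have hr := tendsto_natFloor_mul_div_natCast hβ
  have ht : Tendsto (fun n : ℕ => (n : ℝ)⁻¹) atTop (𝓝 0) := tendsto_inv_atTop_nhds_zero_nat
  have hlin : Tendsto (fun n : ℕ => (n : ℝ) * (⌊β * n⌋₊ * (1 - (1 - (γ / n) ^ 2)))) atTop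
      (𝓝 (β * γ ^ 2)) := by
    refine (hr.mul_const (γ ^ 2)).congr' ?_
    filter_upwards [eventually_ne_atTop 0] with n hn
    field_simp
    ring
  have hsmall : Tendsto (fun n : ℕ => (⌊β * n⌋₊ : ℝ) * (1 - (1 - (γ / n) ^ 2))) atTop (𝓝 0) := by
    rw [show (0 : ℝ) = β * γ ^ 2 * 0 by ring]
    refine ((hr.mul_const (γ ^ 2)).mul ht).congr' ?_
    filter_upwards [eventually_ne_atTop 0] with n hn
    field_simp
    ring
  have hxy : ∀ᶠ n : ℕ in atTop, 0 ≤ 1 - (γ / n) ^ 2 ∧ 1 - (γ / n) ^ 2 ≤ 1 ∧ (1 : ℝ) ≤ 1 := by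
    filter_upwards [eventually_div_natCast_mem_Icc hγ] with n ⟨hq0, hq1⟩
    exact ⟨by nlinarith, by nlinarith, le_rfl⟩
  simpa only [one_pow] using
    tendsto_mul_pow_sub_pow hxy (Eventually.of_forall fun n => Nat.cast_nonneg n) hlin hsmall

theorem tendsto_mul_pow_sub_sq_pow (hβ : 0 ≤ β) (hγ : 0 ≤ γ) :
    Tendsto (fun n : ℕ => ((n : ℝ) - 1) * ((n : ℝ) - 2) *
      ((1 - (γ / n) ^ 2 * (2 - γ / n)) ^ ⌊β * n⌋₊ - ((1 - (γ / n) ^ 2) ^ 2) ^ ⌊β * n⌋₊)) atTop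
      (𝓝 (β * γ ^ 3)) := by
  have hr := tendsto_natFloor_mul_div_natCast hβ
  have ht : Tendsto (fun n : ℕ => (n : ℝ)⁻¹) atTop (𝓝 0) := tendsto_inv_atTop_nhds_zero_nat
  have hlin : Tendsto (fun n : ℕ => ((n : ℝ) - 1) * ((n : ℝ) - 2) *
      (⌊β * n⌋₊ * ((1 - (γ / n) ^ 2 * (2 - γ / n)) - (1 - (γ / n) ^ 2) ^ 2))) atTop
      (𝓝 (β * γ ^ 3)) := by
    have hlim := ((ht.const_sub 1).mul ((ht.const_mul 2).const_sub 1)).mul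
      (hr.mul ((ht.const_mul γ).const_sub 1))
    rw [show β * γ ^ 3 = γ ^ 3 * ((1 - 0) * (1 - 2 * 0) * (β * (1 - γ * 0))) by ring]
    refine (hlim.const_mul _).congr' ?_
    filter_upwards [eventually_ne_atTop 0] with n hn
    field_simp
    ring
  have hsmall : Tendsto (fun n : ℕ => (⌊β * n⌋₊ : ℝ) * (1 - (1 - (γ / n) ^ 2) ^ 2)) atTop
      (𝓝 0) := by
    have hlim := hr.mul ((ht.const_mul (2 * γ ^ 2)).sub ((ht.pow 3).const_mul (γ ^ 4)))
    rw [show (0 : ℝ) = β * (2 * γ ^ 2 * 0 - γ ^ 4 * 0 ^ 3) by ring]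
    refine hlim.congr' ?_
    filter_upwards [eventually_ne_atTop 0] with n hn
    field_simp
    ring
  have hxy : ∀ᶠ n : ℕ in atTop, 0 ≤ (1 - (γ / n) ^ 2) ^ 2 ∧
      (1 - (γ / n) ^ 2) ^ 2 ≤ 1 - (γ / n) ^ 2 * (2 - γ / n) ∧
      1 - (γ / n) ^ 2 * (2 - γ / n) ≤ 1 := by
    filter_upwards [eventually_div_natCast_mem_Icc hγ] with n ⟨hq0, hq1⟩
    refine ⟨sq_nonneg _, ?_, ?_⟩
    · nlinarith [pow_nonneg hq0 3, mul_nonneg (pow_nonneg hq0 3) (sub_nonneg.2 hq1)]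
    · nlinarith [pow_nonneg hq0 2]
  have hs : ∀ᶠ n : ℕ in atTop, 0 ≤ ((n : ℝ) - 1) * ((n : ℝ) - 2) := by
    filter_upwards [eventually_ge_atTop 2] with n hn
    have hn : (2 : ℝ) ≤ n := by exact_mod_cast hn
    nlinarith
  exact tendsto_mul_pow_sub_pow hxy hs hlin hsmall

end RandomIntersectionGraph

theorem rig_second_factorial_moment_tendsto (β γ : ℝ) (hβ : 0 < β) (hγ : 0 < γ) :
    Tendsto (fun n : ℕ =>
        ((n : ℝ) - 1) * ((n : ℝ) - 2) *
          (1 - 2 * (1 - (γ / n) ^ 2) ^ ⌊β * n⌋₊ +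
            (1 - (γ / n) ^ 2 * (2 - γ / n)) ^ ⌊β * n⌋₊))
      atTop (nhds ((β * γ ^ 2) ^ 2 + (β * γ ^ 2) * γ)) := by
  have hA := tendsto_mul_one_sub_one_sub_sq_pow hβ.le hγ.le
  have hB := tendsto_mul_pow_sub_sq_pow hβ.le hγ.le
  have ht : Tendsto (fun n : ℕ => (n : ℝ)⁻¹) atTop (𝓝 0) := tendsto_inv_atTop_nhds_zero_nat
  have hlim := (((ht.const_sub 1).mul ((ht.const_mul 2).const_sub 1)).mul (hA.pow 2)).add hB
  rw [show (β * γ ^ 2) ^ 2 + β * γ ^ 2 * γ = (1 - 0) * (1 - 2 * 0) * (β * γ ^ 2) ^ 2 + β * γ ^ 3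
    by ring]
  refine hlim.congr' ?_
  filter_upwards [eventually_ne_atTop 0] with n hn
  rw [pow_right_comm]
  generalize (1 - (γ / n) ^ 2) ^ ⌊β * n⌋₊ = A
  generalize (1 - (γ / n) ^ 2 * (2 - γ / n)) ^ ⌊β * n⌋₊ = B
  field_simp
  ring
end

section
/- Let n', n'' : ℕ → ℕ satisfy ⌊βn⌋ ≥ n'(n), n'(n)/n → β, n ≥ n''(n), n''(n)/n → 1. Then for each fixed z ∈ [0,1], the generating function of RIG(n', n'', γ/n), namely ∑_{j=0}^{n''-1} C(n''-1,j) z^j (1-z)^{n''-1-j} [1 - γ/n + (γ/n)(1-γ/n)^{n''-1-j}]^{n'}, converges as n → ∞ to exp(βγ(exp(γ(z-1)) - 1)). -/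
open Filter Finset Topology Asymptotics
open scoped Nat

/-!
With `p = γ / n`, expanding the inner power binomially and exchanging the two finite sums
rewrites the generating function as `∑ᵢ P(Bin(n', p) = i) · (z + (1 - z)(1 - p)ⁱ)^(n'' - 1)`:
one conditions on the number of attributes of the vertex instead of on its degree. For fixed `i`
the binomial weight tends to the Poisson weight `e^(-βγ) (βγ)ⁱ / i!` and the second factor to
`e^(γ(z-1)i)`. Since `n' p ≤ βγ` and `0 ≤ z ≤ 1`, the `i`-th term is bounded by `(βγ)ⁱ / i!`, so
Tannery's theorem passes the limit through the sum, which becomes the Poisson generating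
function at `e^(γ(z-1))`.
-/

theorem sum_choose_mul_one_sub_add_mul_pow_comm (m N : ℕ) (z p c : ℝ) :
    ∑ j ∈ range (m + 1),
        (m.choose j : ℝ) * z ^ j * (1 - z) ^ (m - j) * (1 - p + p * c ^ (m - j)) ^ N
      = ∑ i ∈ range (N + 1),
        (N.choose i : ℝ) * p ^ i * (1 - p) ^ (N - i) * (z + (1 - z) * c ^ i) ^ m := by
  calc _ = ∑ j ∈ range (m + 1), ∑ i ∈ range (N + 1),
          (m.choose j : ℝ) * z ^ j * (1 - z) ^ (m - j) *
            ((p * c ^ (m - j)) ^ i * (1 - p) ^ (N - i) * N.choose i) := by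
        refine sum_congr rfl fun j _ => ?_
        rw [add_comm, add_pow, mul_sum]
    _ = ∑ i ∈ range (N + 1), ∑ j ∈ range (m + 1),
          (m.choose j : ℝ) * z ^ j * (1 - z) ^ (m - j) *
            ((p * c ^ (m - j)) ^ i * (1 - p) ^ (N - i) * N.choose i) := sum_comm
    _ = _ := by
        refine sum_congr rfl fun i _ => ?_
        rw [add_pow, mul_sum]
        refine sum_congr rfl fun j _ => ?_
        rw [mul_pow, mul_pow, ← pow_mul, ← pow_mul, Nat.mul_comm]
        ring

theorem tendsto_natCast_sub_div {N : ℕ → ℕ} {c : ℝ} (k : ℕ)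
    (hN : Tendsto (fun n => (N n : ℝ) / n) atTop (𝓝 c)) :
    Tendsto (fun n => ((N n - k : ℕ) : ℝ) / n) atTop (𝓝 c) := by
  have hlow : Tendsto (fun n => (N n : ℝ) / n - k / n) atTop (𝓝 c) := by
    simpa using hN.sub (tendsto_const_div_atTop_nhds_zero_nat (k : ℝ))
  refine tendsto_of_tendsto_of_tendsto_of_le_of_le hlow hN (fun n => ?_) (fun n => ?_)
  · rw [← sub_div]
    gcongr
    have : (N n : ℝ) ≤ ((N n - k : ℕ) : ℝ) + k := by exact_mod_cast le_tsub_add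
    linarith
  · gcongr
    exact_mod_cast Nat.sub_le _ _

theorem tendsto_atTop_of_tendsto_div {N : ℕ → ℕ} {c : ℝ} (hc : 0 < c)
    (hN : Tendsto (fun n => (N n : ℝ) / n) atTop (𝓝 c)) : Tendsto N atTop atTop := by
  refine tendsto_natCast_atTop_iff.mp ((hN.pos_mul_atTop hc tendsto_natCast_atTop_atTop).congr' ?_)
  filter_upwards [eventually_ne_atTop 0] with n hn
  field_simp

theorem tendsto_one_of_tendsto_mul_sub_one {a : ℕ → ℝ} {t : ℝ}
    (ha : Tendsto (fun n => n * (a n - 1)) atTop (𝓝 t)) : Tendsto a atTop (𝓝 1) := by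
  simpa using (ProbabilityTheory.tendsto_zero_of_tendsto_mul_atTop ha).const_add 1

theorem tendsto_pow_of_tendsto_mul_sub_one {a : ℕ → ℝ} {b : ℕ → ℕ} {c t : ℝ}
    (hb : Tendsto (fun n => (b n : ℝ) / n) atTop (𝓝 c))
    (ha : Tendsto (fun n => n * (a n - 1)) atTop (𝓝 t)) :
    Tendsto (fun n => a n ^ b n) atTop (𝓝 (Real.exp (c * t))) := by
  have hpos : ∀ᶠ n in atTop, 0 < a n :=
    (tendsto_one_of_tendsto_mul_sub_one ha).eventually_const_lt one_pos
  have hlog : Tendsto (fun n => (b n : ℝ) / n * (n * Real.log (a n))) atTop (𝓝 (c * t)) := by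
    simpa using hb.mul (Real.tendsto_nat_mul_log_one_add_of_tendsto ha)
  refine ((Real.continuous_exp.tendsto _).comp hlog).congr' ?_
  filter_upwards [hpos, eventually_ne_atTop 0] with n hn hn0
  rw [Function.comp_apply, ← mul_assoc, div_mul_cancel₀ _ (Nat.cast_ne_zero.mpr hn0),
    Real.exp_nat_mul, Real.exp_log hn]

theorem tendsto_mul_pow_sub_one {a : ℕ → ℝ} {t : ℝ}
    (ha : Tendsto (fun n => n * (a n - 1)) atTop (𝓝 t)) (k : ℕ) :
    Tendsto (fun n => n * (a n ^ k - 1)) atTop (𝓝 (k * t)) := by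
  have hgeom : Tendsto (fun n => ∑ i ∈ range k, a n ^ i) atTop (𝓝 k) := by
    simpa using tendsto_finsetSum (range k) fun i _ =>
      (tendsto_one_of_tendsto_mul_sub_one ha).pow i
  refine (hgeom.mul ha).congr fun n => ?_
  rw [← geom_sum_mul]
  ring

theorem tendsto_choose_mul_pow {N : ℕ → ℕ} {p : ℕ → ℝ} {r : ℝ} (hN : Tendsto N atTop atTop)
    (hr : Tendsto (fun n => N n * p n) atTop (𝓝 r)) (k : ℕ) :
    Tendsto (fun n => (N n).choose k * p n ^ k) atTop (𝓝 (r ^ k / k !)) := by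
  have : (fun n => ((N n).choose k : ℝ) * p n ^ k) ~[atTop] fun n => (N n * p n) ^ k / k ! :=
    calc _ ~[atTop] (fun n => ((N n : ℝ) ^ k / k !) * p n ^ k) :=
          ((isEquivalent_choose k).comp_tendsto hN).mul IsEquivalent.refl
      _ ~[atTop] fun n => (N n * p n) ^ k / k ! :=
          EventuallyEq.isEquivalent (.of_eq (by ext; field))
  exact (IsEquivalent.tendsto_nhds_iff this).mpr ((hr.pow k).div_const _)

theorem hasSum_poisson_mul_pow (r x : ℝ) :
    HasSum (fun i : ℕ => Real.exp (-r) * r ^ i / i ! * x ^ i) (Real.exp (r * (x - 1))) := by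
  have hterm : (fun i : ℕ => Real.exp (-r) * r ^ i / i ! * x ^ i)
      = fun i => Real.exp (-r) * ((r * x) ^ i / i !) := by
    funext i
    ring
  rw [hterm, show r * (x - 1) = -r + r * x by ring, Real.exp_add, Real.exp_eq_exp_ℝ]
  exact (NormedSpace.expSeries_div_hasSum_exp (r * x)).mul_left _

/-- `P(Bin(N, p) = i) · E[z^Bin(m, q)]` with `q = 1 - (1 - p)ⁱ`: given that the vertex holds `i`
attributes, each of the other `m` vertices is a neighbour unless it misses all of them. -/
noncomputable def rigPGFTerm (N m : ℕ) (p z : ℝ) (i : ℕ) : ℝ :=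
  N.choose i * p ^ i * (1 - p) ^ (N - i) * (z + (1 - z) * (1 - p) ^ i) ^ m

theorem sum_choose_mul_one_sub_add_mul_pow_eq_tsum (N : ℕ) {M : ℕ} (hM : 1 ≤ M) (p z : ℝ) :
    ∑ j ∈ range M, ((M - 1).choose j : ℝ) * z ^ j * (1 - z) ^ (M - 1 - j) *
        (1 - p + p * (1 - p) ^ (M - 1 - j)) ^ N = ∑' i, rigPGFTerm N (M - 1) p z i := by
  obtain ⟨m, rfl⟩ := Nat.exists_eq_add_of_le' hM
  rw [Nat.add_sub_cancel, sum_choose_mul_one_sub_add_mul_pow_comm,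
    tsum_eq_sum (s := range (N + 1)) fun i hi => ?_]
  · rfl
  · rw [rigPGFTerm, Nat.choose_eq_zero_of_lt (by simpa using hi)]
    simp

theorem abs_rigPGFTerm_le {N m : ℕ} {p z : ℝ} (hp0 : 0 ≤ p) (hp1 : p ≤ 1) (hz0 : 0 ≤ z)
    (hz1 : z ≤ 1) (i : ℕ) : |rigPGFTerm N m p z i| ≤ (N * p) ^ i / i ! := by
  have hq0 : 0 ≤ (1 - p) ^ i := pow_nonneg (by linarith) i
  have hq1 : (1 - p) ^ i ≤ 1 := pow_le_one₀ (by linarith) (by linarith)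
  have hbase0 : 0 ≤ z + (1 - z) * (1 - p) ^ i := by nlinarith
  have hbase1 : z + (1 - z) * (1 - p) ^ i ≤ 1 := by nlinarith
  have hchoose : (N.choose i : ℝ) * p ^ i ≤ (N * p) ^ i / i ! := by
    rw [mul_pow, mul_div_right_comm]
    exact mul_le_mul_of_nonneg_right (Nat.choose_le_pow_div i N) (pow_nonneg hp0 i)
  rw [rigPGFTerm, abs_of_nonneg (by positivity)]
  refine le_trans ?_ hchoose
  calc _ ≤ (N.choose i : ℝ) * p ^ i * 1 * 1 := by
        gcongr
        · exact pow_le_one₀ (by linarith) (by linarith)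
        · exact pow_le_one₀ hbase0 hbase1
    _ = _ := by ring

theorem tendsto_rigPGFTerm {N M : ℕ → ℕ} {β μ : ℝ} (γ z : ℝ) (hβ : 0 < β)
    (hN : Tendsto (fun n => (N n : ℝ) / n) atTop (𝓝 β))
    (hM : Tendsto (fun n => (M n : ℝ) / n) atTop (𝓝 μ)) (i : ℕ) :
    Tendsto (fun n => rigPGFTerm (N n) (M n) (γ / n) z i) atTop
      (𝓝 (Real.exp (-(β * γ)) * (β * γ) ^ i / i ! * Real.exp (μ * γ * (z - 1)) ^ i)) := by
  have hq : Tendsto (fun n : ℕ => n * (1 - γ / n - 1)) atTop (𝓝 (-γ)) := by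
    refine tendsto_const_nhds.congr' ?_
    filter_upwards [eventually_ne_atTop 0] with n hn
    field_simp
    ring
  have hmean : Tendsto (fun n => N n * (γ / n)) atTop (𝓝 (β * γ)) := by
    refine (hN.mul_const γ).congr fun n => ?_
    ring
  have hchoose := tendsto_choose_mul_pow (tendsto_atTop_of_tendsto_div hβ hN) hmean i
  have hrest := tendsto_pow_of_tendsto_mul_sub_one (tendsto_natCast_sub_div i hN) hq
  have hpgf : Tendsto (fun n => (z + (1 - z) * (1 - γ / n) ^ i) ^ M n) atTop
      (𝓝 (Real.exp (μ * ((1 - z) * (i * -γ))))) := by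
    refine tendsto_pow_of_tendsto_mul_sub_one hM
      (((tendsto_mul_pow_sub_one hq i).const_mul (1 - z)).congr fun n => ?_)
    ring
  have hlimit : (β * γ) ^ i / i ! * Real.exp (β * -γ) * Real.exp (μ * ((1 - z) * (i * -γ)))
      = Real.exp (-(β * γ)) * (β * γ) ^ i / i ! * Real.exp (μ * γ * (z - 1)) ^ i := by
    rw [← Real.exp_nat_mul]
    ring_nf
  rw [← hlimit]
  exact (hchoose.mul hrest).mul hpgf

theorem rig_pgf_tendsto_cpoisson_general (β γ : ℝ) (hβ : 0 < β) (hγ : 0 < γ)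
    (n' n'' : ℕ → ℕ)
    (hn' : ∀ n, n' n ≤ ⌊β * (n : ℝ)⌋₊)
    (hn'β : Tendsto (fun n : ℕ => (n' n : ℝ) / n) atTop (nhds β))
    (hn''1 : Tendsto (fun n : ℕ => (n'' n : ℝ) / n) atTop (nhds 1))
    (z : ℝ) (hz0 : 0 ≤ z) (hz1 : z ≤ 1) :
    Tendsto (fun n : ℕ =>
        ∑ j ∈ Finset.range (n'' n),
          (Nat.choose (n'' n - 1) j : ℝ) * z ^ j * (1 - z) ^ (n'' n - 1 - j) *
            (1 - γ / n + (γ / n) * (1 - γ / n) ^ (n'' n - 1 - j)) ^ (n' n))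
      atTop (nhds (Real.exp (β * γ * (Real.exp (γ * (z - 1)) - 1)))) := by
  have hbound : ∀ᶠ n : ℕ in atTop, ∀ i,
      ‖rigPGFTerm (n' n) (n'' n - 1) (γ / n) z i‖ ≤ (β * γ) ^ i / i ! := by
    filter_upwards [eventually_ge_atTop ⌈γ⌉₊, eventually_ne_atTop 0] with n hγn hn0 i
    have hn : (0 : ℝ) < n := by positivity
    have hmean : (n' n : ℝ) * (γ / n) ≤ β * γ := by
      rw [← mul_div_assoc, div_le_iff₀ hn, mul_right_comm]
      gcongr
      exact (Nat.cast_le.mpr (hn' n)).trans (Nat.floor_le (by positivity))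
    refine (abs_rigPGFTerm_le (by positivity) ?_ hz0 hz1 i).trans (by gcongr)
    exact (div_le_one hn).mpr (Nat.ceil_le.mp hγn)
  have hlim := tendsto_tsum_of_dominated_convergence (Real.summable_pow_div_factorial (β * γ))
    (tendsto_rigPGFTerm γ z hβ hn'β (tendsto_natCast_sub_div 1 hn''1)) hbound
  rw [(hasSum_poisson_mul_pow _ _).tsum_eq] at hlim
  simp only [one_mul] at hlim
  refine hlim.congr' ?_
  filter_upwards [(tendsto_atTop_of_tendsto_div one_pos hn''1).eventually_ge_atTop 1] with n hn
  exact (sum_choose_mul_one_sub_add_mul_pow_eq_tsum _ hn _ _).symm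

theorem rig_pgf_tendsto_cpoisson (β γ : ℝ) (hβ : 0 < β) (hγ : 0 < γ)
    (n' n'' : ℕ → ℕ)
    (hn' : ∀ n, n' n ≤ ⌊β * (n : ℝ)⌋₊)
    (hn'β : Tendsto (fun n : ℕ => (n' n : ℝ) / n) atTop (nhds β))
    (hn'' : ∀ n, n'' n ≤ n)
    (hn''1 : Tendsto (fun n : ℕ => (n'' n : ℝ) / n) atTop (nhds 1))
    (z : ℝ) (hz0 : 0 ≤ z) (hz1 : z ≤ 1) :
    Tendsto (fun n : ℕ =>
        ∑ j ∈ Finset.range (n'' n),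
          (Nat.choose (n'' n - 1) j : ℝ) * z ^ j * (1 - z) ^ (n'' n - 1 - j) *
            (1 - γ / n + (γ / n) * (1 - γ / n) ^ (n'' n - 1 - j)) ^ (n' n))
      atTop (nhds (Real.exp (β * γ * (Real.exp (γ * (z - 1)) - 1)))) :=
  rig_pgf_tendsto_cpoisson_general β γ hβ hγ n' n'' hn' hn'β hn''1 z hz0 hz1
end
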